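/- arXiv:1311.2294 — 3 statements merged into one kernel-verified Lean document; each statement's English description precedes it below -/
import Mathlib

section
/- Let n, k be naturals with k < n - k, X = {1,…,n}, and let L_{k,n} be the bipartite graph with vertex set [X]^k ∪ [X]^{n-k} (the k-element and (n-k)-element subsets of X) and edges AB whenever A ∈ [X]^k, B ∈ [X]^{n-k}, and A ⊆ B. If A ∈ [X]^k and B ∈ [X]^{n-k} with |A ∩ B| = i, then the graph distance satisfies ‖AB‖ ≤ 2⌈(k - i)/(n - 2k)⌉ + 1. -/
/-!
From a `k`-set `A`, add `n - 2k` elements of `B \ A` to reach an `(n - k)`-set `C ⊇ A`, and then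
keep a `k`-subset of `C` meeting `B` as much as possible. These two edges raise `|A ∩ B|` by
`n - 2k` (or up to `k`), so after `⌈(k - i)/(n - 2k)⌉` such double steps the current `k`-set lies
inside `B`, and one last edge reaches `B`.
-/

/-- Vertices of the level graph: k-element and (n-k)-element subsets of {1,…,n}. -/
def LevelVert (n k : ℕ) := {A : Finset (Fin n) // A.card = k ∨ A.card = n - k}

/-- The (k,n)-level graph L_{k,n}. -/
def levelGraph (n k : ℕ) : SimpleGraph (LevelVert n k) where
  Adj A B := A ≠ B ∧
    ((A.1.card = k ∧ B.1.card = n - k ∧ A.1 ⊆ B.1) ∨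
     (B.1.card = k ∧ A.1.card = n - k ∧ B.1 ⊆ A.1))
  symm := ⟨by intro A B h; exact ⟨Ne.symm h.1, h.2.elim Or.inr Or.inl⟩⟩
  loopless := ⟨by intro A h; exact h.1 rfl⟩

/-- The initial vertex P = {1,…,k} (as a subset of Fin n). -/
def Pset (n k : ℕ) : Finset (Fin n) := Finset.univ.filter (fun x => (x : ℕ) < k)

open Finset SimpleGraph

namespace Finset

variable {α : Type*} [DecidableEq α]

theorem exists_superset_card_eq_add_inter {A B : Finset α} {d : ℕ} (hd : d ≤ #(B \ A)) :
    ∃ C, A ⊆ C ∧ #C = #A + d ∧ #(A ∩ B) + d ≤ #(C ∩ B) := by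
  obtain ⟨S, hSB, hS⟩ := exists_subset_card_eq hd
  have hAS : Disjoint A S := disjoint_of_subset_right hSB disjoint_sdiff
  refine ⟨A ∪ S, subset_union_left, by rw [card_union_of_disjoint hAS, hS], ?_⟩
  have hsub : A ∩ B ∪ S ⊆ (A ∪ S) ∩ B :=
    union_subset (inter_subset_inter_right subset_union_left)
      (subset_inter subset_union_right (hSB.trans sdiff_subset))
  calc #(A ∩ B) + d = #(A ∩ B ∪ S) := by
        rw [card_union_of_disjoint (disjoint_of_subset_left inter_subset_left hAS), hS]
    _ ≤ #((A ∪ S) ∩ B) := card_le_card hsub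

theorem exists_subset_card_eq_min_le_card_inter {C : Finset α} (B : Finset α) {k : ℕ}
    (hk : k ≤ #C) : ∃ A ⊆ C, #A = k ∧ min k #(C ∩ B) ≤ #(A ∩ B) := by
  obtain ⟨s, hsCB, hs⟩ := exists_subset_card_eq (min_le_right k #(C ∩ B))
  obtain ⟨A, hsA, hAC, hA⟩ :=
    exists_subsuperset_card_eq (hsCB.trans inter_subset_left) (hs.trans_le (min_le_left _ _)) hk
  exact ⟨A, hAC, hA, hs ▸ card_le_card (subset_inter hsA (hsCB.trans inter_subset_right))⟩

end Finset

namespace levelGraph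

variable {n k : ℕ}

theorem adj_of_subset (hk : k < n - k) {A B : LevelVert n k} (hA : #A.1 = k)
    (hB : #B.1 = n - k) (hAB : A.1 ⊆ B.1) : (levelGraph n k).Adj A B := by
  refine ⟨?_, Or.inl ⟨hA, hB, hAB⟩⟩
  rintro rfl
  omega

theorem exists_adj_adj_card_inter (hk : k < n - k) {A B : LevelVert n k} (hA : #A.1 = k)
    (hB : #B.1 = n - k) :
    ∃ C A' : LevelVert n k, (levelGraph n k).Adj A C ∧ (levelGraph n k).Adj C A' ∧
      #A'.1 = k ∧ min k (#(A.1 ∩ B.1) + (n - 2 * k)) ≤ #(A'.1 ∩ B.1) := by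
  have hAB : #(A.1 ∩ B.1) ≤ k := (card_le_card inter_subset_left).trans_eq hA
  have hBA : n - 2 * k ≤ #(B.1 \ A.1) := by
    have := card_sdiff_add_card_inter B.1 A.1
    rw [inter_comm] at this
    omega
  obtain ⟨C, hAC, hCA, hCB⟩ := exists_superset_card_eq_add_inter hBA
  have hC : #C = n - k := by omega
  obtain ⟨A', hA'C, hA', hA'B⟩ :=
    exists_subset_card_eq_min_le_card_inter B.1 (show k ≤ #C by omega)
  refine ⟨⟨C, Or.inr hC⟩, ⟨A', Or.inl hA'⟩, adj_of_subset hk hA hC hAC,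
    (adj_of_subset hk (B := ⟨C, Or.inr hC⟩) hA' hC hA'C).symm, hA', ?_⟩
  exact (min_le_min_left k hCB).trans hA'B

theorem exists_walk_length_le (hk : k < n - k) {B : LevelVert n k} (hB : #B.1 = n - k) (j : ℕ)
    {A : LevelVert n k} (hA : #A.1 = k) (hAB : k - #(A.1 ∩ B.1) ≤ j * (n - 2 * k)) :
    ∃ w : (levelGraph n k).Walk A B, w.length ≤ 2 * j + 1 := by
  induction j generalizing A with
  | zero =>
    have hsub : A.1 ⊆ B.1 := inter_eq_left.1 <|
      eq_of_subset_of_card_le inter_subset_left (by omega)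
    exact ⟨.cons (adj_of_subset hk hA hB hsub) .nil, le_rfl⟩
  | succ j ih =>
    obtain ⟨C, A', hAC, hCA', hA', hA'B⟩ := exists_adj_adj_card_inter hk hA hB
    obtain ⟨w, hw⟩ := ih hA' (by rw [Nat.succ_mul] at hAB; omega)
    exact ⟨.cons hAC (.cons hCA' w), by simp only [Walk.length_cons]; omega⟩

end levelGraph

theorem dist_le_of_card_ne (n k i : ℕ) (hk : k < n - k)
    (A B : LevelVert n k) (hA : A.1.card = k) (hB : B.1.card = n - k)
    (hi : (A.1 ∩ B.1).card = i) :
    (levelGraph n k).dist A B ≤ 2 * ((k - i + (n - 2 * k) - 1) / (n - 2 * k)) + 1 := by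
  -- `Nat.ceilDiv a d` unfolds to `(a + d - 1) / d`
  have hceil : k - i ≤ (n - 2 * k) * ((k - i) ⌈/⌉ (n - 2 * k)) :=
    (ceilDiv_le_iff_le_mul (by omega)).1 le_rfl
  obtain ⟨w, hw⟩ :=
    levelGraph.exists_walk_length_le hk hB _ hA (by rw [hi, mul_comm]; exact hceil)
  exact (dist_le w).trans hw
end

section
/- Define d on the vertices of L_{k,n} by d(A,B) = 2⌈(k - |A∩B|)/(n-2k)⌉ + 1 if |A| ≠ |B|, and d(A,B) = 2⌈(|A| - |A∩B|)/(n-2k)⌉ if |A| = |B|. Then d satisfies the triangle inequality: d(A,B) + d(B,C) ≥ d(A,C) for all vertices A, B, C. -/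
/-- The distance function d on vertices of the level graph. -/
def dFun (n k : ℕ) (A B : LevelVert n k) : ℕ :=
  if A.1.card = B.1.card then
    2 * ((A.1.card - (A.1 ∩ B.1).card + (n - 2 * k) - 1) / (n - 2 * k))
  else
    2 * ((k - (A.1 ∩ B.1).card + (n - 2 * k) - 1) / (n - 2 * k)) + 1

lemma Nat.ceilDiv_le_add_ceilDiv_add {m u v w c : ℕ} (hm : 0 < m) (h : u ≤ v + w + m * c) :
    u ⌈/⌉ m ≤ v ⌈/⌉ m + w ⌈/⌉ m + c := by
  have hv : v ≤ m * (v ⌈/⌉ m) := le_smul_ceilDiv hm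
  have hw : w ≤ m * (w ⌈/⌉ m) := le_smul_ceilDiv hm
  rw [ceilDiv_le_iff_le_smul hm, smul_eq_mul, mul_add, mul_add]
  omega

lemma Finset.card_inter_add_card_inter_le {α : Type*} [DecidableEq α] (s t u : Finset α) :
    (s ∩ t).card + (t ∩ u).card ≤ t.card + (s ∩ u).card := by
  have hunion : (s ∩ t ∪ t ∩ u).card ≤ t.card :=
    card_le_card (union_subset inter_subset_right inter_subset_left)
  have hinter : (s ∩ t ∩ (t ∩ u)).card ≤ (s ∩ u).card :=
    card_le_card fun x hx => by simp only [mem_inter] at hx ⊢; exact ⟨hx.1.1, hx.2.2⟩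
  have := card_union_add_card_inter (s ∩ t) (t ∩ u)
  omega

theorem dFun_triangle (n k : ℕ) (hk : k < n - k) :
    ∀ A B C : LevelVert n k, dFun n k A B + dFun n k B C ≥ dFun n k A C := by
  rintro ⟨A, hA⟩ ⟨B, hB⟩ ⟨C, hC⟩
  have hABC := Finset.card_inter_add_card_inter_le A B C
  simp only [dFun, ge_iff_le, ← Nat.ceilDiv_eq_add_pred_div]
  set m := n - 2 * k with hm_def
  have hm : 0 < m := by omega
  -- Sizes take only the two distinct values `k` and `n - k`, so four size patterns are impossible.
  split_ifs <;> try omega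
  · have := Nat.ceilDiv_le_add_ceilDiv_add hm (show A.card - (A ∩ C).card ≤
      (A.card - (A ∩ B).card) + (B.card - (B ∩ C).card) + m * 0 by omega)
    omega
  · have := Nat.ceilDiv_le_add_ceilDiv_add hm (show A.card - (A ∩ C).card ≤
      (k - (A ∩ B).card) + (k - (B ∩ C).card) + m * 1 by omega)
    omega
  · have := Nat.ceilDiv_le_add_ceilDiv_add hm (show k - (A ∩ C).card ≤
      (A.card - (A ∩ B).card) + (k - (B ∩ C).card) + m * 0 by omega)
    omega
  · have := Nat.ceilDiv_le_add_ceilDiv_add hm (show k - (A ∩ C).card ≤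
      (k - (A ∩ B).card) + (B.card - (B ∩ C).card) + m * 0 by omega)
    omega
end

section
/- For naturals n, k with 2k < n: C(n,k) = Σ_{i=0}^{⌈k/(n-2k)⌉} Σ_{j=1}^{n-2k} C(k, k - ((i-1)(n-2k) + j))·C(n-k, i(n-2k) + j), where C(a,b) = 0 whenever b < 0 or b > a (indices interpreted as integers). -/
/-- Extended binomial coefficient: C(a,b) = 0 for b < 0 (and for b > a, via Nat.choose). -/
def C (a : ℕ) (b : ℤ) : ℕ := if 0 ≤ b then a.choose b.toNat else 0

open Finset

lemma sum_range_mul_split (F : ℕ → ℕ) (s m : ℕ) :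
    ∑ t ∈ range (s * m), F t = ∑ i ∈ range s, ∑ j ∈ range m, F (i * m + j) := by
  induction s with
  | zero => simp
  | succ s ih =>
    rw [Nat.succ_mul, Finset.sum_range_add, ih, Finset.sum_range_succ]

theorem choose_eq_double_sum_upper (n k : ℕ) (h : 2 * k < n) :
    Nat.choose n k =
      ∑ i ∈ Finset.Iic ((k + (n - 2 * k) - 1) / (n - 2 * k)),
        ∑ j ∈ Finset.Icc 1 (n - 2 * k),
          C k ((k : ℤ) - (((i : ℤ) - 1) * (n - 2 * k) + j)) *
          C (n - k) ((i : ℤ) * (n - 2 * k) + j) := by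
  set m := n - 2 * k with hm
  have hm0 : 0 < m := by omega
  have hnk : n - k = k + m := by omega
  set I := (k + m - 1) / m with hI
  have hIm : k ≤ I * m := by
    have h1 := Nat.div_add_mod (k + m - 1) m
    have h2 := Nat.mod_lt (k + m - 1) hm0
    rw [hI, Nat.mul_comm]
    omega
  set F : ℕ → ℕ := fun t => C k ((k : ℤ) + m - 1 - t) * C (n - k) ((t : ℤ) + 1) with hF
  -- Step 1: rewrite the double sum as a single sum over range ((I+1)*m)
  have step1 : (∑ i ∈ Finset.Iic I, ∑ j ∈ Finset.Icc 1 m,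
        C k ((k : ℤ) - (((i : ℤ) - 1) * m + j)) * C (n - k) ((i : ℤ) * m + j))
      = ∑ t ∈ range ((I + 1) * m), F t := by
    rw [sum_range_mul_split]
    have hIic : Finset.Iic I = range (I + 1) := by
      ext x; simp [Nat.lt_succ_iff]
    rw [hIic]
    refine Finset.sum_congr rfl fun i _ => ?_
    have hIcc : Finset.Icc 1 m = Finset.Ico 1 (m + 1) := by
      rw [Finset.Ico_add_one_right_eq_Icc]
    rw [hIcc, Finset.sum_Ico_eq_sum_range]
    simp only [Nat.add_sub_cancel]
    refine Finset.sum_congr rfl fun j _ => ?_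
    rw [hF]
    congr 1
    · congr 1; push_cast; ring
    · congr 1; push_cast; ring
  simp only [show ((n : ℤ) - 2 * (k : ℤ)) = (m : ℤ) from by omega]
  rw [step1]
  -- Step 2: drop zero terms above k + m
  have step2 : ∑ t ∈ range ((I + 1) * m), F t = ∑ t ∈ range (k + m), F t := by
    refine (Finset.sum_subset ?_ ?_).symm
    · apply Finset.range_subset_range.mpr; nlinarith
    · intro t _ ht
      simp only [Finset.mem_range, not_lt] at ht
      have : ¬ ((t : ℤ) + 1 ≤ (n - k : ℕ)) := by
        rw [hnk]; push_cast; omega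
      have hz : C (n - k) ((t : ℤ) + 1) = 0 := by
        rw [C, if_pos (by positivity)]
        apply Nat.choose_eq_zero_of_lt
        omega
      simp [hF, hz]
  rw [step2]
  -- Step 3: drop zero terms below m - 1
  have step3 : ∑ t ∈ range (k + m), F t = ∑ t ∈ Finset.Ico (m - 1) (k + m), F t := by
    rw [← Nat.Ico_zero_eq_range, ← Finset.sum_Ico_consecutive _ (Nat.zero_le (m - 1)) (by omega)]
    have : ∑ t ∈ Finset.Ico 0 (m - 1), F t = 0 := by
      apply Finset.sum_eq_zero
      intro t ht
      simp only [Finset.mem_Ico] at ht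
      have hz : C k ((k : ℤ) + m - 1 - t) = 0 := by
        rw [C, if_pos (by omega)]
        apply Nat.choose_eq_zero_of_lt
        omega
      simp [hF, hz]
    rw [this, zero_add]
  rw [step3, Finset.sum_Ico_eq_sum_range]
  have hlen : k + m - (m - 1) = k + 1 := by omega
  rw [hlen]
  -- Step 4: evaluate the terms
  have step4 : ∀ s ∈ range (k + 1),
      F (m - 1 + s) = k.choose (k - s) * (k + m).choose (m + s) := by
    intro s hs
    simp only [Finset.mem_range, Nat.lt_succ_iff] at hs
    have e1 : (k : ℤ) + m - 1 - (m - 1 + s : ℕ) = ((k - s : ℕ) : ℤ) := by push_cast; omega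
    have e2 : ((m - 1 + s : ℕ) : ℤ) + 1 = ((m + s : ℕ) : ℤ) := by push_cast; omega
    rw [hF]
    simp only [e1, e2, hnk]
    rw [C, if_pos (by positivity), C, if_pos (by positivity), Int.toNat_natCast,
      Int.toNat_natCast]
  rw [Finset.sum_congr rfl step4]
  -- Step 5: Vandermonde
  have hV : n.choose k = ∑ a ∈ range (k + m + 1), k.choose a * (k + m).choose (k + m - a) := by
    rw [← Nat.choose_symm (show k ≤ n by omega), hnk, show n = k + (k + m) by omega,
      Nat.add_choose_eq, Finset.Nat.sum_antidiagonal_eq_sum_range_succ_mk]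
  rw [hV]
  -- drop a > k terms
  have hdrop : ∑ a ∈ range (k + m + 1), k.choose a * (k + m).choose (k + m - a)
      = ∑ a ∈ range (k + 1), k.choose a * (k + m).choose (k + m - a) := by
    refine (Finset.sum_subset (Finset.range_subset_range.mpr (by omega)) ?_).symm
    intro a _ ha
    simp only [Finset.mem_range, not_lt] at ha
    rw [Nat.choose_eq_zero_of_lt (by omega), zero_mul]
  rw [hdrop, ← Finset.sum_range_reflect]
  refine Finset.sum_congr rfl fun s hs => ?_
  simp only [Finset.mem_range, Nat.lt_succ_iff] at hs
  rw [show k + 1 - 1 - s = k - s by omega, show k + m - (k - s) = m + s by omega]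
end
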